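/- For every integer n > 3, every ν ≥ 0 and every x ≥ 0, the Dunkl–Szász–Beta operator applied to g(s) = s² satisfies T_n(s²; x) = (1/(n²−5n+6)) · (1/e_ν(nx)) Σ_{r=1}^∞ r(r+1) (nx)^r/γ_ν(r). -/

import Mathlib

open MeasureTheory Filter

/-- Dunkl coefficients: `γ_ν(2r) = 2^(2r) r! Γ(r+ν+1/2)/Γ(ν+1/2)`,
`γ_ν(2r+1) = 2^(2r+1) r! Γ(r+ν+3/2)/Γ(ν+1/2)`. -/
noncomputable def dGamma (ν : ℝ) (r : ℕ) : ℝ :=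
  if r % 2 = 0 then
    2 ^ r * (Nat.factorial (r / 2)) * Real.Gamma ((r / 2 : ℕ) + ν + 1 / 2) / Real.Gamma (ν + 1 / 2)
  else
    2 ^ r * (Nat.factorial (r / 2)) * Real.Gamma ((r / 2 : ℕ) + ν + 3 / 2) / Real.Gamma (ν + 1 / 2)

/-- Dunkl exponential `: e_ν(x) = Σ_{r=0}^∞ x^r/γ_ν(r)`. -/
noncomputable def eDunkl (ν x : ℝ) : ℝ := ∑' r : ℕ, x ^ r / dGamma ν r

/-- Dunkl–Szász–Beta operator
`T_n(g;x) = ((n−1)/e_ν(nx)) Σ_{r=1}^∞ C(n+r−2,r−1)(nx)^r/γ_ν(r) ∫_0^∞ s^{r−1}(1+s)^{−(n+r−1)} g(s) ds + g(0)/e_ν(nx)`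
(the sum over `r ≥ 1` is written via the index shift `r = k+1`). -/
noncomputable def Tn (ν : ℝ) (n : ℕ) (g : ℝ → ℝ) (x : ℝ) : ℝ :=
  ((n : ℝ) - 1) / eDunkl ν (n * x) *
      ∑' k : ℕ, (Nat.choose (n + k - 1) k : ℝ) * (n * x) ^ (k + 1) / dGamma ν (k + 1) *
        ∫ s in Set.Ioi (0 : ℝ), s ^ k / (1 + s) ^ (n + k) * g s
    + g 0 / eDunkl ν (n * x)


open Set Topology Nat

/-! The kernel integrals of `Tn` are Beta integrals of the second kind,
`∫₀^∞ s^a (1+s)^{-(a+b+2)} ds = a! b! / (a+b+1)!`, which follow by integrating by parts in `a`.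
For `g(s) = s²` the `k`-th integral is `(k+2)! (n-4)! / (n+k-1)!`, and against the weight
`(n-1) C(n+k-1, k)` this collapses to `(k+1)(k+2) / ((n-2)(n-3))`, so the series factors termwise. -/

lemma tendsto_inv_one_add_pow_atTop {c : ℕ} (hc : c ≠ 0) :
    Tendsto (fun s : ℝ => ((1 + s) ^ c)⁻¹) atTop (𝓝 0) :=
  ((tendsto_pow_atTop hc).comp (tendsto_atTop_add_const_left _ 1 tendsto_id)).inv_tendsto_atTop

lemma tendsto_pow_div_one_add_pow_atTop {a m : ℕ} (h : a < m) :
    Tendsto (fun s : ℝ => s ^ a / (1 + s) ^ m) atTop (𝓝 0) := by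
  obtain ⟨b, rfl⟩ : ∃ b, m = a + b + 1 := ⟨m - a - 1, by omega⟩
  refine squeeze_zero' ?_ ?_ (tendsto_inv_one_add_pow_atTop (c := b + 1) b.succ_ne_zero)
  all_goals filter_upwards [eventually_ge_atTop 0] with s hs
  · positivity
  · rw [add_assoc, pow_add, ← div_div, ← div_pow, div_eq_mul_inv]
    exact mul_le_of_le_one_left (by positivity)
      (pow_le_one₀ (by positivity) ((div_le_one (by positivity)).2 (by linarith)))

lemma integrableOn_pow_div_one_add_pow {a m : ℕ} (h : a + 2 ≤ m) :
    IntegrableOn (fun s : ℝ => s ^ a / (1 + s) ^ m) (Ioi 0) := by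
  have hdom : Integrable (fun s : ℝ => (1 + ‖s‖) ^ (-2 : ℝ)) :=
    integrable_one_add_norm (by simp)
  refine hdom.integrableOn.mono' ?_ ?_
  · exact (ContinuousOn.div (by fun_prop) (by fun_prop)
      fun s (hs : 0 < s) => by positivity).aestronglyMeasurable measurableSet_Ioi
  · filter_upwards [ae_restrict_mem measurableSet_Ioi] with s (hs : 0 < s)
    rw [Real.norm_of_nonneg (by positivity), Real.norm_of_nonneg hs.le,
      Real.rpow_neg (by positivity), Real.rpow_two, div_le_iff₀ (by positivity)]
    calc s ^ a ≤ (1 + s) ^ a := pow_le_pow_left₀ hs.le (by linarith) a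
      _ = ((1 + s) ^ 2)⁻¹ * (1 + s) ^ (a + 2) := by field_simp; ring
      _ ≤ ((1 + s) ^ 2)⁻¹ * (1 + s) ^ m :=
        mul_le_mul_of_nonneg_left (pow_le_pow_right₀ (by linarith) h) (by positivity)

lemma hasDerivAt_pow_div_one_add_pow (a m : ℕ) {s : ℝ} (hs : 1 + s ≠ 0) :
    HasDerivAt (fun s : ℝ => s ^ (a + 1) / (1 + s) ^ (m + 1))
      ((a + 1) * (s ^ a / (1 + s) ^ (m + 1)) - (m + 1) * (s ^ (a + 1) / (1 + s) ^ (m + 2))) s := by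
  refine ((hasDerivAt_pow (a + 1) s).fun_div (((hasDerivAt_id' s).const_add 1).fun_pow (m + 1))
    (pow_ne_zero _ hs)).congr_deriv ?_
  simp only [Nat.add_sub_cancel]
  push_cast
  field_simp
  ring

lemma integral_Ioi_inv_one_add_pow (b : ℕ) :
    ∫ s in Ioi (0:ℝ), ((1 + s) ^ (b + 2))⁻¹ = ((b:ℝ) + 1)⁻¹ := by
  have hderiv : ∀ s ∈ Ici (0:ℝ), HasDerivAt (fun s : ℝ => -(((b:ℝ) + 1)⁻¹ * ((1 + s) ^ (b + 1))⁻¹))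
      ((1 + s) ^ (b + 2))⁻¹ s := by
    intro s (hs : 0 ≤ s)
    have h1s : 0 < 1 + s := by linarith
    refine (((((hasDerivAt_id' s).const_add 1).fun_pow (b + 1)).fun_inv
      (by positivity)).const_mul ((b:ℝ) + 1)⁻¹).neg.congr_deriv ?_
    simp only [Nat.add_sub_cancel]
    push_cast
    field_simp
    ring
  have hlim : Tendsto (fun s : ℝ => -(((b:ℝ) + 1)⁻¹ * ((1 + s) ^ (b + 1))⁻¹)) atTop (𝓝 0) := by
    simpa using ((tendsto_inv_one_add_pow_atTop b.succ_ne_zero).const_mul ((b:ℝ) + 1)⁻¹).neg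
  have hint : IntegrableOn (fun s : ℝ => ((1 + s) ^ (b + 2))⁻¹) (Ioi 0) := by
    simpa using integrableOn_pow_div_one_add_pow (a := 0) (m := b + 2) (by omega)
  rw [integral_Ioi_of_hasDerivAt_of_tendsto' hderiv hint hlim]
  simp

lemma integral_Ioi_pow_succ_div_one_add_pow {a m : ℕ} (h : a + 1 ≤ m) :
    ((m:ℝ) + 1) * ∫ s in Ioi (0:ℝ), s ^ (a + 1) / (1 + s) ^ (m + 2)
      = (a + 1) * ∫ s in Ioi (0:ℝ), s ^ a / (1 + s) ^ (m + 1) := by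
  have hint₁ := integrableOn_pow_div_one_add_pow (a := a) (m := m + 1) (by omega)
  have hint₂ := integrableOn_pow_div_one_add_pow (a := a + 1) (m := m + 2) (by omega)
  have hFTC := integral_Ioi_of_hasDerivAt_of_tendsto'
    (fun s (hs : 0 ≤ s) => hasDerivAt_pow_div_one_add_pow a m (by positivity))
    ((hint₁.const_mul _).sub (hint₂.const_mul _))
    (tendsto_pow_div_one_add_pow_atTop (by omega))
  rw [integral_sub (hint₁.const_mul _) (hint₂.const_mul _), integral_const_mul,
    integral_const_mul] at hFTC
  simp only [zero_pow (Nat.succ_ne_zero a), zero_div, sub_zero] at hFTC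
  linear_combination -hFTC

theorem integral_Ioi_pow_div_one_add_pow (a b : ℕ) :
    ∫ s in Ioi (0:ℝ), s ^ a / (1 + s) ^ (a + b + 2) = (a ! * b ! : ℝ) / (a + b + 1)! := by
  induction a with
  | zero =>
    simp only [pow_zero, one_div, zero_add, integral_Ioi_inv_one_add_pow, Nat.factorial_zero,
      Nat.factorial_succ]
    push_cast
    field_simp
  | succ a ih =>
    have hrec := integral_Ioi_pow_succ_div_one_add_pow (a := a) (m := a + b + 1) (by omega)
    rw [show a + b + 1 + 1 = a + b + 2 by omega, ih, show a + b + 1 + 2 = a + 1 + b + 2 by omega]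
      at hrec
    rw [show a + 1 + b + 1 = a + b + 1 + 1 by omega, Nat.factorial_succ, Nat.factorial_succ]
    have hF : ((a + b + 1)! : ℝ) ≠ 0 := by positivity
    push_cast at hrec ⊢
    field_simp at hrec ⊢
    linear_combination hrec

lemma sub_one_mul_choose_mul_integral_Ioi_sq {n : ℕ} (hn : 3 < n) (k : ℕ) :
    ((n:ℝ) - 1) * ((n + k - 1).choose k * ∫ s in Ioi (0:ℝ), s ^ k / (1 + s) ^ (n + k) * s ^ 2)
      = ((k:ℝ) + 1) * (k + 2) / ((n:ℝ) ^ 2 - 5 * n + 6) := by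
  obtain ⟨m, rfl⟩ : ∃ m, n = m + 4 := ⟨n - 4, by omega⟩
  have hint : ∫ s in Ioi (0:ℝ), s ^ k / (1 + s) ^ (m + 4 + k) * s ^ 2
      = ((k + 2)! * m ! : ℝ) / (k + 2 + m + 1)! := by
    rw [← integral_Ioi_pow_div_one_add_pow]
    congr 1 with s
    rw [show k + 2 + m + 2 = m + 4 + k by omega]
    ring
  have hchoose : ((m + 4 + k - 1).choose k : ℝ) = (m + k + 3)! / (k ! * (m + 3)!) := by
    rw [show m + 4 + k - 1 = m + k + 3 by omega, Nat.cast_choose ℝ (by omega),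
      show m + k + 3 - k = m + 3 by omega]
  have hquad : ((m + 4 : ℕ) : ℝ) ^ 2 - 5 * (m + 4 : ℕ) + 6 = (m + 1) * (m + 2) := by
    push_cast
    ring
  rw [hint, hchoose, hquad, show k + 2 + m + 1 = m + k + 3 by omega]
  simp only [Nat.factorial_succ]
  push_cast
  field_simp
  ring

theorem stmt18_general (ν : ℝ) (n : ℕ) (hn : 3 < n) (x : ℝ) :
    Tn ν n (fun s => s ^ 2) x =
      1 / ((n : ℝ) ^ 2 - 5 * n + 6) * (1 / eDunkl ν (n * x)) *
        ∑' r : ℕ, ((r : ℝ) + 1) * ((r : ℝ) + 2) * (n * x) ^ (r + 1) / dGamma ν (r + 1) := by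
  simp only [Tn, zero_pow two_ne_zero, zero_div, add_zero, ← tsum_mul_left]
  refine tsum_congr fun k => ?_
  linear_combination ((n * x) ^ (k + 1) / dGamma ν (k + 1) / eDunkl ν (n * x)) *
    sub_one_mul_choose_mul_integral_Ioi_sq hn k

theorem stmt18 (ν : ℝ) (hν : 0 ≤ ν) (n : ℕ) (hn : 3 < n) (x : ℝ) (hx : 0 ≤ x) :
    Tn ν n (fun s => s ^ 2) x =
      1 / ((n : ℝ) ^ 2 - 5 * n + 6) * (1 / eDunkl ν (n * x)) *
        ∑' r : ℕ, ((r : ℝ) + 1) * ((r : ℝ) + 2) * (n * x) ^ (r + 1) / dGamma ν (r + 1) :=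
  stmt18_general ν n hn x
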